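/- Let w, w*, x ∈ ℝ^d with ‖x‖₂ ≤ 1, γ > 0, |w*·x| ≥ γ (margin condition), and |w·x| < γ/2. Let η, η_x ∈ [0, 1/2) with η_x ≤ η, and set g = ((1−2η)·sign(w·x) − (1−2η_x)·sign(w*·x)) · x / max(|w·x|, γ/2). Then g·(w − w*) ≥ 2(err − η), where err = η_x if sign(w·x) = sign(w*·x) and err = 1 − η_x otherwise. -/

import Mathlib

/-!
Write `a = w·x` and `b = w*·x`. Since `|a| < γ/2` the clipping denominator is `γ/2`, so
`g·(w − w*) = (2/γ) c (a − b)` for the scalar coefficient `c` of `g`. If the signs of `a` and `b`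
agree, `c (a − b) = 2(η − ηₓ)(|b| − |a|) ≥ 0`; if they differ, `c (a − b) = 2(1 − η − ηₓ)(|b| + |a|)`
and the margin gives `|b| + |a| ≥ γ`.
-/

noncomputable def sgn (t : ℝ) : ℝ := if t ≥ 0 then 1 else -1

lemma sgn_mul_self (t : ℝ) : sgn t * t = |t| := by
  unfold sgn
  split_ifs with h
  · rw [one_mul, abs_of_nonneg h]
  · rw [neg_one_mul, abs_of_neg (not_le.mp h)]

lemma sgn_eq_neg_of_ne {s t : ℝ} (h : sgn s ≠ sgn t) : sgn s = -sgn t := by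
  unfold sgn at *
  split_ifs at * <;> norm_num at *

lemma sgn_mul_sub_of_sgn_eq {a b : ℝ} (h : sgn a = sgn b) : sgn b * (b - a) = |b| - |a| := by
  rw [mul_sub, sgn_mul_self, ← h, sgn_mul_self]

lemma sgn_mul_sub_of_sgn_ne {a b : ℝ} (h : sgn a ≠ sgn b) : sgn b * (b - a) = |b| + |a| := by
  rw [← sgn_mul_self a, sgn_eq_neg_of_ne h, ← sgn_mul_self b]
  ring

lemma clipped_coeff_mul_sub_ge {a b γ η ηx : ℝ} (hmargin : γ ≤ |b|) (hclose : |a| ≤ γ / 2)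
    (hη : η < 1 / 2) (hηx : ηx ≤ η) :
    γ * ((if sgn a = sgn b then ηx else 1 - ηx) - η) ≤
      ((1 - 2 * η) * sgn a - (1 - 2 * ηx) * sgn b) * (a - b) := by
  have hγ : 0 ≤ γ := by linarith [abs_nonneg a]
  split_ifs with h
  · calc γ * (ηx - η) ≤ 0 := mul_nonpos_of_nonneg_of_nonpos hγ (by linarith)
      _ ≤ 2 * (η - ηx) * (|b| - |a|) := mul_nonneg (by linarith) (by linarith)
      _ = _ := by rw [← sgn_mul_sub_of_sgn_eq h, h]; ring
  · have hcoeff : 0 ≤ 1 - η - ηx := by linarith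
    calc γ * (1 - ηx - η) ≤ 2 * (1 - η - ηx) * γ := by linarith [mul_nonneg hγ hcoeff]
      _ ≤ 2 * (1 - η - ηx) * (|b| + |a|) :=
        mul_le_mul_of_nonneg_left (by linarith [abs_nonneg a]) (by linarith)
      _ = _ := by rw [← sgn_mul_sub_of_sgn_ne h, sgn_eq_neg_of_ne h]; ring

theorem stmt_2_general {d : ℕ} (w wstar x : EuclideanSpace ℝ (Fin d)) (γ η ηx : ℝ)
    (hmargin : |(inner ℝ wstar x : ℝ)| ≥ γ)
    (hclose : |(inner ℝ w x : ℝ)| < γ / 2)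
    (hη1 : η < 1 / 2) (hηx : ηx ≤ η)
    (g : EuclideanSpace ℝ (Fin d))
    (hg : g = (((1 - 2 * η) * sgn (inner ℝ w x) - (1 - 2 * ηx) * sgn (inner ℝ wstar x))
      / max |(inner ℝ w x : ℝ)| (γ / 2)) • x)
    (err : ℝ)
    (herr : err = if sgn (inner ℝ w x) = sgn ((inner ℝ wstar x : ℝ)) then ηx else 1 - ηx) :
    (inner ℝ g (w - wstar) : ℝ) ≥ 2 * (err - η) := by
  have hγ : 0 < γ / 2 := (abs_nonneg _).trans_lt hclose
  have hinner : (inner ℝ g (w - wstar) : ℝ) =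
      ((1 - 2 * η) * sgn (inner ℝ w x) - (1 - 2 * ηx) * sgn (inner ℝ wstar x))
        * (inner ℝ w x - inner ℝ wstar x) / (γ / 2) := by
    rw [hg, max_eq_right hclose.le, real_inner_smul_left, inner_sub_right,
      real_inner_comm w, real_inner_comm wstar]
    ring
  rw [hinner, herr, ge_iff_le, le_div_iff₀ hγ]
  linarith [clipped_coeff_mul_sub_ge hmargin hclose.le hη1 hηx]

theorem stmt_2 {d : ℕ} (w wstar x : EuclideanSpace ℝ (Fin d)) (γ η ηx : ℝ)
    (hγ : 0 < γ) (hx : ‖x‖ ≤ 1) (hmargin : |(inner ℝ wstar x : ℝ)| ≥ γ)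
    (hclose : |(inner ℝ w x : ℝ)| < γ / 2)
    (hη0 : 0 ≤ ηx) (hη1 : η < 1 / 2) (hηx : ηx ≤ η)
    (g : EuclideanSpace ℝ (Fin d))
    (hg : g = (((1 - 2 * η) * sgn (inner ℝ w x) - (1 - 2 * ηx) * sgn (inner ℝ wstar x))
      / max |(inner ℝ w x : ℝ)| (γ / 2)) • x)
    (err : ℝ)
    (herr : err = if sgn (inner ℝ w x) = sgn ((inner ℝ wstar x : ℝ)) then ηx else 1 - ηx) :
    (inner ℝ g (w - wstar) : ℝ) ≥ 2 * (err - η) :=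
  stmt_2_general w wstar x γ η ηx hmargin hclose hη1 hηx g hg err herr
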